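/- Let X be a finite set, m the uniform measure, c : X × X → ℝ≥0 symmetric, L the associated generator, ω > 0, γ : X → ℝ, and θ = (iω − L)^{−1}γ (assuming invertibility). Suppose there is a constant C with |⟨h, γ⟩_{L²(m)}| ≤ C ‖∇h‖_{L²(ν)} for all h : X → ℂ, where ‖∇h‖²_{L²(ν)} = (1/|X|)Σ_{x,y} c(x,y)|h(y)−h(x)|². Then ‖∇θ_R‖_{L²(ν)} ≤ 2C, ‖∇θ_I‖²_{L²(ν)} ≤ 4C², and ω‖θ‖²_{L²(m)} ≤ 2C². -/

import Mathlib

/-!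
Pairing `(iω - L) θ = γ` with `θ` and using `⟨θ, -L θ⟩ = ½ ‖∇θ‖²` gives
`⟨θ, γ⟩ = ½ ‖∇θ‖² + i ω ‖θ‖²`. The real part and the hypothesis give `½ ‖∇θ‖² ≤ C ‖∇θ‖`,
hence `‖∇θ‖ ≤ 2C`; the imaginary part then gives `ω ‖θ‖² ≤ C ‖∇θ‖ ≤ 2C²`. Both bounds on
`θ_R` and `θ_I` follow from `‖∇θ‖² = ‖∇θ_R‖² + ‖∇θ_I‖²`.
-/

open Finset ComplexConjugate

section GraphLaplacian

variable {X 𝕜 : Type*} [Fintype X] [RCLike 𝕜]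

def graphLaplacian (c : X → X → ℝ) (f : X → 𝕜) (x : X) : 𝕜 :=
  ∑ y, (c x y : 𝕜) * (f y - f x)

def dirichletEnergy (c : X → X → ℝ) (f : X → 𝕜) : ℝ :=
  ∑ x, ∑ y, c x y * ‖f y - f x‖ ^ 2

theorem dirichletEnergy_nonneg {c : X → X → ℝ} (hpos : ∀ x y, 0 ≤ c x y) (f : X → 𝕜) :
    0 ≤ dirichletEnergy c f :=
  sum_nonneg fun x _ => sum_nonneg fun y _ => mul_nonneg (hpos x y) (by positivity)

theorem dirichletEnergy_real (c : X → X → ℝ) (f : X → ℝ) :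
    dirichletEnergy c f = ∑ x, ∑ y, c x y * (f y - f x) ^ 2 := by
  simp only [dirichletEnergy, Real.norm_eq_abs, sq_abs]

theorem dirichletEnergy_eq_re_add_im (c : X → X → ℝ) (f : X → ℂ) :
    dirichletEnergy c f
      = dirichletEnergy c (fun x => (f x).re) + dirichletEnergy c (fun x => (f x).im) := by
  simp only [dirichletEnergy, ← sum_add_distrib, ← mul_add]
  refine sum_congr rfl fun x _ => sum_congr rfl fun y _ => ?_
  rw [Complex.sq_norm, Complex.normSq_apply, Real.norm_eq_abs, Real.norm_eq_abs, sq_abs, sq_abs,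
    Complex.sub_re, Complex.sub_im, sq, sq]

/-- Symmetry of `c` lets one average the double sum with its transpose. -/
theorem sum_conj_mul_graphLaplacian {c : X → X → ℝ} (hsym : ∀ x y, c x y = c y x)
    (f : X → 𝕜) :
    ∑ x, conj (f x) * graphLaplacian c f x = -((dirichletEnergy c f / 2 : ℝ) : 𝕜) := by
  set Q := ∑ x, conj (f x) * graphLaplacian c f x
  have hQ : Q = ∑ x, ∑ y, (c x y : 𝕜) * (conj (f x) * (f y - f x)) := by
    simp only [Q, graphLaplacian, mul_sum]
    exact sum_congr rfl fun x _ => sum_congr rfl fun y _ => by ring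
  have hQ' : Q = ∑ x, ∑ y, (c x y : 𝕜) * (conj (f y) * (f x - f y)) := by
    rw [hQ, sum_comm]
    exact sum_congr rfl fun x _ => sum_congr rfl fun y _ => by rw [hsym]
  have h2Q : Q + Q = -(dirichletEnergy c f : 𝕜) := by
    nth_rw 1 [hQ]
    rw [hQ']
    simp only [dirichletEnergy, ← sum_add_distrib, RCLike.ofReal_sum, ← sum_neg_distrib]
    refine sum_congr rfl fun x _ => sum_congr rfl fun y _ => ?_
    rw [RCLike.ofReal_mul, RCLike.ofReal_pow, ← RCLike.conj_mul, map_sub]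
    ring
  push_cast
  linear_combination h2Q / 2

end GraphLaplacian

theorem sum_conj_mul_eq_of_resolvent {X : Type*} [Fintype X] {c : X → X → ℝ}
    (hsym : ∀ x y, c x y = c y x) {ω : ℝ} {γ : X → ℝ} {θ : X → ℂ}
    (hθ : ∀ x, Complex.I * ω * θ x - graphLaplacian c θ x = γ x) :
    ∑ x, conj (θ x) * γ x
      = (dirichletEnergy c θ / 2 : ℝ) + Complex.I * (ω * ∑ x, ‖θ x‖ ^ 2 : ℝ) := by
  have hL := sum_conj_mul_graphLaplacian hsym θ
  simp only [← hθ, mul_sub, sum_sub_distrib, hL]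
  push_cast
  have hT : ∑ x, conj (θ x) * (Complex.I * ω * θ x) = Complex.I * ω * ∑ x, (‖θ x‖ : ℂ) ^ 2 := by
    rw [mul_sum]
    refine sum_congr rfl fun x _ => ?_
    rw [← Complex.conj_mul']
    ring
  linear_combination hT

theorem sqrt_le_two_mul_of_half_le_mul_sqrt {e C : ℝ} (hC : 0 ≤ C) (he : 0 ≤ e)
    (h : e / 2 ≤ C * √e) : √e ≤ 2 * C := by
  have hsq := Real.sq_sqrt he
  nlinarith [Real.sqrt_nonneg e]

theorem stmt5_general {X : Type*} [Fintype X]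
    (c : X → X → ℝ) (hsym : ∀ x y, c x y = c y x) (hpos : ∀ x y, 0 ≤ c x y)
    (ω : ℝ) (γ : X → ℝ) (θ : X → ℂ)
    (hθ : ∀ x, Complex.I * ω * θ x - ∑ y, (c x y : ℂ) * (θ y - θ x) = γ x)
    (C : ℝ) (hC : 0 ≤ C)
    (hbound : ∀ h : X → ℂ,
      ‖(∑ x, (starRingEnd ℂ) (h x) * γ x) / (Fintype.card X : ℂ)‖
        ≤ C * Real.sqrt
            ((∑ x, ∑ y, c x y * ‖h y - h x‖ ^ 2) / (Fintype.card X : ℝ))) :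
    Real.sqrt ((∑ x, ∑ y, c x y * ((θ y).re - (θ x).re) ^ 2) / (Fintype.card X : ℝ)) ≤ 2 * C
    ∧ (∑ x, ∑ y, c x y * ((θ y).im - (θ x).im) ^ 2) / (Fintype.card X : ℝ) ≤ 4 * C ^ 2
    ∧ ω * ((∑ x, ‖θ x‖ ^ 2) / (Fintype.card X : ℝ)) ≤ 2 * C ^ 2 := by
  set N : ℝ := (Fintype.card X : ℝ)
  set P := ∑ x, conj (θ x) * γ x
  have hP : P = (dirichletEnergy c θ / 2 : ℝ) + Complex.I * (ω * ∑ x, ‖θ x‖ ^ 2 : ℝ) :=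
    sum_conj_mul_eq_of_resolvent hsym hθ
  have hPC : ‖P‖ / N ≤ C * √(dirichletEnergy c θ / N) := by
    have h := hbound θ
    rwa [norm_div, Complex.norm_natCast] at h
  have hPre : P.re = dirichletEnergy c θ / 2 := by
    rw [hP, Complex.add_re, Complex.ofReal_re, Complex.I_mul_re, Complex.ofReal_im, neg_zero,
      add_zero]
  have hPim : P.im = ω * ∑ x, ‖θ x‖ ^ 2 := by
    rw [hP, Complex.add_im, Complex.ofReal_im, Complex.I_mul_im, Complex.ofReal_re, zero_add]
  have hEN : 0 ≤ dirichletEnergy c θ / N :=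
    div_nonneg (dirichletEnergy_nonneg hpos θ) (Nat.cast_nonneg _)
  have hE : √(dirichletEnergy c θ / N) ≤ 2 * C := by
    refine sqrt_le_two_mul_of_half_le_mul_sqrt hC hEN (le_trans ?_ hPC)
    rw [div_right_comm, ← hPre]
    gcongr
    exact Complex.re_le_norm P
  have hsplit := dirichletEnergy_eq_re_add_im c θ
  have hre := dirichletEnergy_nonneg hpos fun x => (θ x).re
  have him := dirichletEnergy_nonneg hpos fun x => (θ x).im
  simp only [← dirichletEnergy_real]
  refine ⟨?_, ?_, ?_⟩
  · exact (Real.sqrt_le_sqrt (by gcongr; linarith)).trans hE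
  · calc dirichletEnergy c (fun x => (θ x).im) / N ≤ dirichletEnergy c θ / N := by
          gcongr; linarith
      _ = √(dirichletEnergy c θ / N) ^ 2 := (Real.sq_sqrt hEN).symm
      _ ≤ (2 * C) ^ 2 := by gcongr
      _ = 4 * C ^ 2 := by ring
  · calc ω * ((∑ x, ‖θ x‖ ^ 2) / N) = P.im / N := by rw [hPim, mul_div_assoc]
      _ ≤ ‖P‖ / N := by gcongr; exact Complex.im_le_norm P
      _ ≤ C * (2 * C) := hPC.trans (by gcongr)
      _ = 2 * C ^ 2 := by ring

/-- A priori bounds on the solution `θ` of `(iω − L)θ = γ` under the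
Poincaré-type bound `|⟨h,γ⟩| ≤ C‖∇h‖`. -/
theorem stmt5 {X : Type*} [Fintype X] [Nonempty X]
    (c : X → X → ℝ) (hsym : ∀ x y, c x y = c y x) (hpos : ∀ x y, 0 ≤ c x y)
    (ω : ℝ) (hω : 0 < ω) (γ : X → ℝ) (θ : X → ℂ)
    (hθ : ∀ x, Complex.I * ω * θ x - ∑ y, (c x y : ℂ) * (θ y - θ x) = γ x)
    (C : ℝ) (hC : 0 ≤ C)
    (hbound : ∀ h : X → ℂ,
      ‖(∑ x, (starRingEnd ℂ) (h x) * γ x) / (Fintype.card X : ℂ)‖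
        ≤ C * Real.sqrt
            ((∑ x, ∑ y, c x y * ‖h y - h x‖ ^ 2) / (Fintype.card X : ℝ))) :
    Real.sqrt ((∑ x, ∑ y, c x y * ((θ y).re - (θ x).re) ^ 2) / (Fintype.card X : ℝ)) ≤ 2 * C
    ∧ (∑ x, ∑ y, c x y * ((θ y).im - (θ x).im) ^ 2) / (Fintype.card X : ℝ) ≤ 4 * C ^ 2
    ∧ ω * ((∑ x, ‖θ x‖ ^ 2) / (Fintype.card X : ℝ)) ≤ 2 * C ^ 2 :=
  stmt5_general c hsym hpos ω γ θ hθ C hC hbound
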